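/- arXiv:math/0302156 — 5 statements merged into one kernel-verified Lean document; each statement's English description precedes it below -/
import Mathlib

section
/- (Lemme 6) Let k be a finite field of odd characteristic and let ε ∈ k be nonzero. If it is not the case that both card k = 3 and ε = 1, then there exists ξ ∈ k, ξ ≠ 0, such that ξ² − ε is not a square in k. -/
/-!
Counting the points of the conic `x² - y² = ε`, which is `uv = ε` after a linear change of
variables and so has `q - 1` points, gives `∑ₓ χ(x² - ε) = -1` for the quadratic character `χ`.
If `ξ² - ε` were a square for every `ξ ≠ 0`, all those terms would be `≥ 0` while the term
`χ(-ε)` at `ξ = 0` is `≥ -1`; so every `ξ ≠ 0` would be a root of `X² - ε`. Then `ε = 1² = 1`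
and `k = {0, 1, -1}`.
-/

open Finset

section

variable {F : Type*} [Field F] [Fintype F] [DecidableEq F]

theorem card_filter_mul_eq {ε : F} (hε : ε ≠ 0) :
    #{p : F × F | p.1 * p.2 = ε} = Fintype.card F - 1 := by
  rw [← card_univ, ← card_erase_of_mem (mem_univ 0)]
  refine card_nbij' Prod.fst (fun u => (u, ε / u)) ?_ ?_ ?_ ?_
  · rintro ⟨x, y⟩ h
    simp only [coe_filter, mem_univ, true_and, Set.mem_ofPred_eq] at h
    simp only [mem_coe, mem_erase, mem_univ, and_true]
    rintro rfl
    exact hε (by simpa using h.symm)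
  · intro u hu
    simp only [mem_coe, mem_erase, mem_univ, and_true] at hu
    simp [mul_div_cancel₀ _ hu]
  · rintro ⟨x, y⟩ h
    simp only [coe_filter, mem_univ, true_and, Set.mem_ofPred_eq] at h
    have hx : x ≠ 0 := left_ne_zero_of_mul (h ▸ hε)
    simp [← h, mul_div_cancel_left₀ _ hx]
  · intro u _
    rfl

theorem card_filter_sq_sub_sq_eq (hF : ringChar F ≠ 2) (ε : F) :
    #{p : F × F | p.1 ^ 2 - p.2 ^ 2 = ε} = #{p : F × F | p.1 * p.2 = ε} := by
  have h2 : (2 : F) ≠ 0 := Ring.two_ne_zero hF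
  refine card_nbij' (fun p => (p.1 + p.2, p.1 - p.2))
    (fun p => ((p.1 + p.2) / 2, (p.1 - p.2) / 2)) ?_ ?_ ?_ ?_
  · rintro ⟨x, y⟩ h
    simp only [coe_filter, mem_univ, true_and, Set.mem_ofPred_eq] at h ⊢
    rw [← h]; ring
  · rintro ⟨u, v⟩ h
    simp only [coe_filter, mem_univ, true_and, Set.mem_ofPred_eq] at h ⊢
    rw [← h]; field_simp; ring
  · rintro ⟨x, y⟩ -
    ext <;> field_simp <;> ring
  · rintro ⟨u, v⟩ -
    ext <;> field_simp <;> ring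

theorem card_filter_sq_sub_sq_eq_sum (ε : F) :
    #{p : F × F | p.1 ^ 2 - p.2 ^ 2 = ε} = ∑ x : F, #{y : F | y ^ 2 = x ^ 2 - ε} := by
  simp only [card_filter, Fintype.sum_prod_type]
  refine sum_congr rfl fun x _ => sum_congr rfl fun y _ => if_congr ?_ rfl rfl
  constructor <;> intro h <;> linear_combination -h

theorem sum_quadraticChar_sq_sub_eq_neg_one (hF : ringChar F ≠ 2) {ε : F} (hε : ε ≠ 0) :
    ∑ x : F, quadraticChar F (x ^ 2 - ε) = -1 := by
  have hsqrts (a : F) : (#{y : F | y ^ 2 = a} : ℤ) = quadraticChar F a + 1 := by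
    rw [← quadraticChar_card_sqrts hF a, Set.toFinset_ofPred]
  have hcount := card_filter_sq_sub_sq_eq_sum ε
  rw [card_filter_sq_sub_sq_eq hF, card_filter_mul_eq hε] at hcount
  have hcount' : (Fintype.card F : ℤ) - 1 = ∑ x : F, (quadraticChar F (x ^ 2 - ε) + 1) := by
    rw [← Nat.cast_pred Fintype.card_pos, hcount, Nat.cast_sum]
    exact sum_congr rfl fun x _ => hsqrts _
  rw [sum_add_distrib, sum_const, card_univ, nsmul_one] at hcount'
  linarith

theorem quadraticChar_nonneg_of_isSquare {a : F} (ha : IsSquare a) : 0 ≤ quadraticChar F a := by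
  obtain ⟨r, rfl⟩ := ha
  rw [map_mul]
  exact mul_self_nonneg _

theorem sq_eq_of_forall_isSquare_sq_sub (hF : ringChar F ≠ 2) {ε : F} (hε : ε ≠ 0)
    (h : ∀ ξ : F, ξ ≠ 0 → IsSquare (ξ ^ 2 - ε)) (ξ : F) (hξ : ξ ≠ 0) : ξ ^ 2 = ε := by
  have hsum := sum_quadraticChar_sq_sub_eq_neg_one hF hε
  rw [← add_sum_erase univ _ (mem_univ 0), zero_pow two_ne_zero, zero_sub] at hsum
  have hnonneg : ∀ x ∈ univ.erase (0 : F), 0 ≤ quadraticChar F (x ^ 2 - ε) :=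
    fun x hx => quadraticChar_nonneg_of_isSquare (h x (ne_of_mem_erase hx))
  have hterm_zero : -1 ≤ quadraticChar F (-ε) := by
    rcases quadraticChar_dichotomy (neg_ne_zero.mpr hε) with h1 | h1 <;> simp [h1]
  have hrest : ∑ x ∈ univ.erase 0, quadraticChar F (x ^ 2 - ε) = 0 :=
    le_antisymm (by linarith) (sum_nonneg hnonneg)
  have hterm_ξ := (sum_eq_zero_iff_of_nonneg hnonneg).mp hrest ξ (mem_erase.mpr ⟨hξ, mem_univ ξ⟩)
  exact sub_eq_zero.mp (quadraticChar_eq_zero_iff.mp hterm_ξ)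

theorem card_eq_three_of_forall_sq_eq_one (hF : ringChar F ≠ 2)
    (h : ∀ x : F, x ≠ 0 → x ^ 2 = 1) : Fintype.card F = 3 := by
  rw [← card_univ, card_eq_three]
  refine ⟨0, 1, -1, zero_ne_one, (neg_ne_zero.2 one_ne_zero).symm,
    (Ring.neg_one_ne_one_of_char_ne_two hF).symm, ?_⟩
  ext x
  simp only [mem_univ, mem_insert, mem_singleton, true_iff]
  exact (em (x = 0)).imp_right fun hx => sq_eq_one_iff.mp (h x hx)

end

/-- (Lemme 6) For a finite field `k` of odd characteristic and nonzero `ε ∈ k`, unless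
`k = 𝔽₃` and `ε = 1`, there is a nonzero `ξ ∈ k` with `ξ² − ε` a non-square. -/
theorem lemme6 {k : Type*} [Field k] [Fintype k] (hchar : ringChar k ≠ 2)
    (ε : k) (hε : ε ≠ 0) (hexc : ¬ (Fintype.card k = 3 ∧ ε = 1)) :
    ∃ ξ : k, ξ ≠ 0 ∧ ¬ IsSquare (ξ ^ 2 - ε) := by
  classical
  by_contra! hsq
  have hsq_eq := sq_eq_of_forall_isSquare_sq_sub hchar hε hsq
  obtain rfl : ε = 1 := by simpa using (hsq_eq 1 one_ne_zero).symm
  exact hexc ⟨card_eq_three_of_forall_sq_eq_one hchar hsq_eq, rfl⟩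
end

section
/- (Lemme 7) Let k be a finite field of odd characteristic, let α ∈ k be a non-square, and let δ₁, δ₂ ∈ k be nonzero elements with δ₁² ≠ δ₂². Then there exist nonzero ξ, η, ζ ∈ k such that α·ξ² − δ₁² = η² and α·ξ² − δ₂² = α·ζ². -/
/-!
Put `βᵢ = δᵢ² / α`: these are distinct non-squares whose ratio is a square `c²`, and it suffices
to find `ξ ≠ 0` with `ξ² - β₁` a non-square and `ξ² - β₂` a square, since then
`α (ξ² - β₁) = η²` and `ξ² - β₂ = ζ²`. If there were no such `ξ`, every `ξ` with `ξ² - β₂` a square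
would also have `ξ² - β₁` a square; as `ξ ↦ c ξ` maps the second set injectively into the first,
finiteness makes the two sets equal. Then `s - β₁` and `s - β₂` lie in the same square class for
every square `s`, so `s ↦ (s - β₁) / (s - β₂)` is an injective self-map of the finite set of
squares that misses the value `1`, which is absurd.
-/

theorem isSquare_sq_mul_iff {K : Type*} [CommGroupWithZero K] {c : K} (hc : c ≠ 0) {x : K} :
    IsSquare (c ^ 2 * x) ↔ IsSquare x :=
  ⟨fun h => by simpa [hc] using h.div (IsSquare.sq c), (IsSquare.sq c).mul⟩

namespace FiniteField

variable {k : Type*} [Field k] [Fintype k]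

theorem isSquare_mul_of_not_isSquare {a b : k} (ha : ¬IsSquare a) (hb : ¬IsSquare b) :
    IsSquare (a * b) := by
  classical
  have ha0 : a ≠ 0 := by rintro rfl; exact ha .zero
  have hb0 : b ≠ 0 := by rintro rfl; exact hb .zero
  rw [← quadraticChar_one_iff_isSquare (mul_ne_zero ha0 hb0), map_mul,
    quadraticChar_neg_one_iff_not_isSquare.mpr ha, quadraticChar_neg_one_iff_not_isSquare.mpr hb]
  norm_num

theorem isSquare_div_of_isSquare_iff {a b : k} (h : IsSquare a ↔ IsSquare b) :
    IsSquare (a / b) := by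
  by_cases hb : IsSquare b
  · exact (h.mpr hb).div hb
  · rw [div_eq_mul_inv]
    exact isSquare_mul_of_not_isSquare (h.not.mpr hb) (isSquare_inv.not.mpr hb)

theorem exists_isSquare_not_iff_isSquare_sub {β₁ β₂ : k} (h₂ : ¬IsSquare β₂) (hne : β₁ ≠ β₂) :
    ∃ s, IsSquare s ∧ ¬(IsSquare (s - β₁) ↔ IsSquare (s - β₂)) := by
  by_contra! h
  have hden : ∀ {s}, IsSquare s → s - β₂ ≠ 0 := fun hs h0 => h₂ (sub_eq_zero.mp h0 ▸ hs)
  set μ : k → k := fun s => (s - β₁) / (s - β₂)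
  have hmaps : Set.MapsTo μ {s | IsSquare s} {s | IsSquare s} :=
    fun s hs => isSquare_div_of_isSquare_iff (h s hs)
  have hinj : Set.InjOn μ {s | IsSquare s} := by
    intro s hs t ht hst
    rw [div_eq_div_iff (hden hs) (hden ht)] at hst
    exact mul_left_cancel₀ (sub_ne_zero.mpr hne) (by linear_combination hst)
  obtain ⟨s, hs, hs1⟩ :=
    (((Set.toFinite _).injOn_iff_bijOn_of_mapsTo hmaps).mp hinj).surjOn (IsSquare.one (α := k))
  rw [div_eq_one_iff_eq (hden hs)] at hs1
  exact hne (sub_right_inj.mp hs1)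

theorem exists_not_isSquare_sq_sub_and_isSquare_sq_sub {β₁ β₂ : k} (h₁ : ¬IsSquare β₁)
    (h₂ : ¬IsSquare β₂) (hne : β₁ ≠ β₂) :
    ∃ ξ ≠ 0, ¬IsSquare (ξ ^ 2 - β₁) ∧ IsSquare (ξ ^ 2 - β₂) := by
  by_contra! h
  set W : k → Set k := fun β => {ξ | IsSquare (ξ ^ 2 - β)}
  have hratio : IsSquare (β₂ / β₁) := isSquare_div_of_isSquare_iff (iff_of_false h₂ h₁)
  have hβ₁0 : β₁ ≠ 0 := by rintro rfl; exact h₁ .zero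
  have hsub : W β₂ ⊆ W β₁ := by
    intro ξ hξ
    by_cases hξ0 : ξ = 0
    · subst hξ0
      have hneg : -β₁ = -β₂ / (β₂ / β₁) := by
        have hβ₂0 : β₂ ≠ 0 := by rintro rfl; exact h₂ .zero
        field_simp
      change IsSquare ((0 : k) ^ 2 - β₂) at hξ
      change IsSquare ((0 : k) ^ 2 - β₁)
      rw [zero_pow two_ne_zero, zero_sub] at hξ ⊢
      exact hneg ▸ hξ.div hratio
    · by_contra hξ1
      exact h ξ hξ0 hξ1 hξ
  obtain ⟨c, hc⟩ := hratio
  have hβ₂ : β₂ = c ^ 2 * β₁ := by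
    rw [div_eq_iff hβ₁0] at hc
    rw [hc]; ring
  have hc0 : c ≠ 0 := by rintro rfl; exact h₂ (by simp [hβ₂])
  have hscale : Set.MapsTo (c * ·) (W β₁) (W β₂) := by
    intro ξ hξ
    change IsSquare ((c * ξ) ^ 2 - β₂)
    rwa [hβ₂, mul_pow, ← mul_sub, isSquare_sq_mul_iff hc0]
  have hbij := ((Set.toFinite (W β₁)).injOn_iff_bijOn_of_mapsTo (hscale.mono_right hsub)).mp
    (mul_right_injective₀ hc0).injOn
  have hW : W β₁ = W β₂ := (hbij.image_eq ▸ hscale.image_subset).antisymm hsub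
  obtain ⟨s, ⟨x, rfl⟩, hiff⟩ := exists_isSquare_not_iff_isSquare_sub h₂ hne
  rw [← sq] at hiff
  exact hiff (Set.ext_iff.mp hW x)

end FiniteField

theorem lemme7_general {k : Type*} [Field k] [Fintype k]
    (α : k) (hα : ¬ IsSquare α) (δ₁ δ₂ : k) (hδ₁ : δ₁ ≠ 0) (hδ₂ : δ₂ ≠ 0)
    (hne : δ₁ ^ 2 ≠ δ₂ ^ 2) :
    ∃ ξ η ζ : k, ξ ≠ 0 ∧ η ≠ 0 ∧ ζ ≠ 0 ∧
      α * ξ ^ 2 - δ₁ ^ 2 = η ^ 2 ∧ α * ξ ^ 2 - δ₂ ^ 2 = α * ζ ^ 2 := by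
  have hα0 : α ≠ 0 := by rintro rfl; exact hα .zero
  have hβ : ∀ {δ : k}, δ ≠ 0 → ¬IsSquare (δ ^ 2 / α) := fun {δ} hδ h =>
    hα (by simpa [hδ] using (IsSquare.sq δ).div h)
  obtain ⟨ξ, hξ, hns, ζ, hζ⟩ :=
    FiniteField.exists_not_isSquare_sq_sub_and_isSquare_sq_sub (hβ hδ₁) (hβ hδ₂)
      fun h => hne ((div_left_inj' hα0).mp h)
  obtain ⟨η, hη⟩ := FiniteField.isSquare_mul_of_not_isSquare hα hns
  refine ⟨ξ, η, ζ, hξ, ?_, ?_, ?_, ?_⟩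
  · rintro rfl
    exact hns ⟨0, by simpa [hα0] using hη⟩
  · rintro rfl
    exact hβ hδ₂ ⟨ξ, by rw [← sq]; linear_combination -hζ⟩
  · rw [sq η, ← hη]; field_simp
  · rw [sq ζ, ← hζ]; field_simp

/-- (Lemme 7) Over a finite field of odd characteristic, with `α` a non-square and
`δ₁, δ₂` nonzero with `δ₁² ≠ δ₂²`, there exist nonzero `ξ, η, ζ` with
`α·ξ² − δ₁² = η²` and `α·ξ² − δ₂² = α·ζ²`. -/
theorem lemme7 {k : Type*} [Field k] [Fintype k] (hchar : ringChar k ≠ 2)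
    (α : k) (hα : ¬ IsSquare α) (δ₁ δ₂ : k) (hδ₁ : δ₁ ≠ 0) (hδ₂ : δ₂ ≠ 0)
    (hne : δ₁ ^ 2 ≠ δ₂ ^ 2) :
    ∃ ξ η ζ : k, ξ ≠ 0 ∧ η ≠ 0 ∧ ζ ≠ 0 ∧
      α * ξ ^ 2 - δ₁ ^ 2 = η ^ 2 ∧ α * ξ ^ 2 - δ₂ ^ 2 = α * ζ ^ 2 :=
  lemme7_general α hα δ₁ δ₂ hδ₁ hδ₂ hne
end

section
/- (Lemme 10) Let k be a finite field of odd characteristic, let ε ∈ k be a nonzero square, set ε₁ = ε₂ = ε, and let ε₁₂ ∈ k be an arbitrary nonzero element. Define sq : k → ZMod 2 by sq(x) = 0 if x is a square in k and sq(x) = 1 otherwise, define θ̄ : k → ZMod 2 × ZMod 2 by θ̄(0) = (sq(ε₁·ε₂), sq(−ε₁)), θ̄(ε₁) = (sq(ε₁), sq(ε₁·ε₁₂)), and θ̄(t) = (sq(t), sq(t − ε₁)) for t ∉ {0, ε₁}, and let Ω = {t ∈ k : t·(t − ε₁)·(t − ε₂) is a square in k}. Then the subgroup of (ZMod 2) ×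 (ZMod 2) generated by the image θ̄(Ω) equals the subgroup {0} × (ZMod 2), i.e. the subgroup {(0,0), (0,1)}. -/
open scoped Classical

/-- `sqClass x = 0` if `x` is a square, `1` otherwise. -/
noncomputable def sqClass {k : Type*} [Field k] (x : k) : ZMod 2 :=
  if IsSquare x then 0 else 1

/-- The map `θ̄ : k → ZMod 2 × ZMod 2` attached to `ε₁, ε₂, ε₁₂`. -/
noncomputable def thetaBar {k : Type*} [Field k] (ε₁ ε₂ ε₁₂ : k) (t : k) :
    ZMod 2 × ZMod 2 :=
  if t = 0 then (sqClass (ε₁ * ε₂), sqClass (-ε₁))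
  else if t = ε₁ then (sqClass ε₁, sqClass (ε₁ * ε₁₂))
  else (sqClass t, sqClass (t - ε₁))

/-!
For `ε` a nonzero square, `t(t - ε)²` is a square exactly when `t = ε` or `t` is a square, so
every point of `Ω` has first coordinate `sq(t) = 0` (for `t = 0, ε` the special values are
`sq(ε²) = sq(ε) = 0`). It remains to find `t ∈ Ω` with `θ̄(t) = (0, 1)`: `t = 0` works unless
`-ε` is a square, `t = ε` works unless `ε·ε₁₂` is a square, and in the remaining case `-1` is a
square and `t = ε s` works for any nonzero square `s` with `s - 1` a nonsquare. Such an `s` is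
`((c + 1)/(c - 1))²` for a nonsquare `c`, since then `s - 1 = c·(2/(c - 1))²`.
-/

section Squares

variable {k : Type*} [Field k]

lemma isSquare_mul_iff_of_isSquare {a : k} (ha : IsSquare a) (ha0 : a ≠ 0) (b : k) :
    IsSquare (a * b) ↔ IsSquare b :=
  ⟨fun h => by simpa [mul_div_cancel_left₀ b ha0] using h.div ha, ha.mul⟩

lemma sqClass_of_isSquare {x : k} (hx : IsSquare x) : sqClass x = 0 := if_pos hx

lemma sqClass_of_not_isSquare {x : k} (hx : ¬IsSquare x) : sqClass x = 1 := if_neg hx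

lemma exists_isSquare_not_isSquare_sub_one [Fintype k] (hchar : ringChar k ≠ 2)
    (hneg : IsSquare (-1 : k)) : ∃ s : k, s ≠ 0 ∧ IsSquare s ∧ ¬IsSquare (s - 1) := by
  obtain ⟨c, hc⟩ := FiniteField.exists_nonsquare hchar
  have hc1 : c - 1 ≠ 0 := fun h => hc ⟨1, by linear_combination h⟩
  have hc2 : c + 1 ≠ 0 := fun h => hc (by rwa [eq_neg_of_add_eq_zero_left h])
  have h2 : (2 : k) ≠ 0 := Ring.two_ne_zero hchar
  refine ⟨((c + 1) / (c - 1)) ^ 2, by positivity, ⟨_, sq _⟩, fun hs => hc ?_⟩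
  have hs1 : ((c + 1) / (c - 1)) ^ 2 - 1 = (2 / (c - 1)) ^ 2 * c := by
    field_simp
    ring
  rw [hs1] at hs
  exact (isSquare_mul_iff_of_isSquare ⟨_, sq _⟩ (by positivity) c).mp hs

end Squares

section ThetaBar

variable {k : Type*} [Field k]

lemma thetaBar_zero (ε₁ ε₂ ε₁₂ : k) :
    thetaBar ε₁ ε₂ ε₁₂ 0 = (sqClass (ε₁ * ε₂), sqClass (-ε₁)) := if_pos rfl

lemma thetaBar_self {ε₁ : k} (h : ε₁ ≠ 0) (ε₂ ε₁₂ : k) :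
    thetaBar ε₁ ε₂ ε₁₂ ε₁ = (sqClass ε₁, sqClass (ε₁ * ε₁₂)) := by
  rw [thetaBar, if_neg h, if_pos rfl]

lemma thetaBar_of_ne {ε₁ t : k} (h0 : t ≠ 0) (h1 : t ≠ ε₁) (ε₂ ε₁₂ : k) :
    thetaBar ε₁ ε₂ ε₁₂ t = (sqClass t, sqClass (t - ε₁)) := by
  rw [thetaBar, if_neg h0, if_neg h1]

variable {ε : k}

lemma isSquare_mul_sub_mul_sub_of_isSquare {t : k} (ht : IsSquare t) :
    IsSquare (t * (t - ε) * (t - ε)) := by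
  rw [mul_assoc]
  exact ht.mul ⟨_, rfl⟩

lemma thetaBar_fst_eq_zero (hsq : IsSquare ε) (ε₁₂ : k) {t : k}
    (ht : IsSquare (t * (t - ε) * (t - ε))) : (thetaBar ε ε ε₁₂ t).1 = 0 := by
  by_cases h0 : t = 0
  · rw [h0, thetaBar_zero, sqClass_of_isSquare (hsq.mul hsq)]
  by_cases h1 : t = ε
  · rw [h1, thetaBar_self (by rintro rfl; exact h0 h1), sqClass_of_isSquare hsq]
  have hsub : (t - ε) * (t - ε) ≠ 0 := mul_self_ne_zero.mpr (sub_ne_zero.mpr h1)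
  rw [thetaBar_of_ne h0 h1, sqClass_of_isSquare]
  rw [mul_assoc, mul_comm] at ht
  exact (isSquare_mul_iff_of_isSquare ⟨_, rfl⟩ hsub t).mp ht

lemma exists_thetaBar_eq_zero_one [Fintype k] (hchar : ringChar k ≠ 2) (hε : ε ≠ 0)
    (hsq : IsSquare ε) (ε₁₂ : k) :
    ∃ t : k, IsSquare (t * (t - ε) * (t - ε)) ∧ thetaBar ε ε ε₁₂ t = (0, 1) := by
  by_cases hneg : IsSquare (-ε)
  swap
  · refine ⟨0, ⟨0, by ring⟩, ?_⟩
    rw [thetaBar_zero, sqClass_of_isSquare (hsq.mul hsq), sqClass_of_not_isSquare hneg]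
  by_cases h12 : IsSquare (ε * ε₁₂)
  swap
  · refine ⟨ε, ⟨0, by ring⟩, ?_⟩
    rw [thetaBar_self hε, sqClass_of_isSquare hsq, sqClass_of_not_isSquare h12]
  have hneg1 : IsSquare (-1 : k) :=
    (isSquare_mul_iff_of_isSquare hsq hε _).mp (by rwa [mul_neg_one])
  obtain ⟨s, hs0, hs, hs1⟩ := exists_isSquare_not_isSquare_sub_one hchar hneg1
  have ht : IsSquare (ε * s) := hsq.mul hs
  have hsub : ε * s - ε = ε * (s - 1) := by ring
  have hs1' : ¬IsSquare (ε * s - ε) := by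
    rwa [hsub, isSquare_mul_iff_of_isSquare hsq hε]
  have hne : ε * s ≠ ε := fun h => hs1' (by rw [h, sub_self]; exact ⟨0, by ring⟩)
  refine ⟨ε * s, isSquare_mul_sub_mul_sub_of_isSquare ht, ?_⟩
  rw [thetaBar_of_ne (mul_ne_zero hε hs0) hne, sqClass_of_isSquare ht,
    sqClass_of_not_isSquare hs1']

end ThetaBar

lemma AddSubgroup.closure_eq_bot_prod_top_zmod_two {S : Set (ZMod 2 × ZMod 2)}
    (hS : ∀ x ∈ S, x.1 = 0) (h01 : ((0, 1) : ZMod 2 × ZMod 2) ∈ S) :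
    AddSubgroup.closure S = (⊥ : AddSubgroup (ZMod 2)).prod ⊤ := by
  apply le_antisymm
  · rw [AddSubgroup.closure_le]
    intro x hx
    exact AddSubgroup.mem_prod.mpr ⟨(AddSubgroup.mem_bot).mpr (hS x hx), trivial⟩
  · rintro ⟨a, b⟩ hab
    obtain rfl : a = 0 := AddSubgroup.mem_bot.mp (AddSubgroup.mem_prod.mp hab).1
    fin_cases b
    · exact zero_mem _
    · exact AddSubgroup.subset_closure h01

theorem lemme10_general {k : Type*} [Field k] [Fintype k] (hchar : ringChar k ≠ 2)
    (ε : k) (hε : ε ≠ 0) (hsq : IsSquare ε) (ε₁₂ : k) :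
    AddSubgroup.closure
        (thetaBar ε ε ε₁₂ '' {t : k | IsSquare (t * (t - ε) * (t - ε))}) =
      AddSubgroup.prod (⊥ : AddSubgroup (ZMod 2)) (⊤ : AddSubgroup (ZMod 2)) := by
  obtain ⟨t₀, ht₀, hθ⟩ := exists_thetaBar_eq_zero_one hchar hε hsq ε₁₂
  refine AddSubgroup.closure_eq_bot_prod_top_zmod_two ?_ ⟨t₀, ht₀, hθ⟩
  rintro _ ⟨t, ht, rfl⟩
  exact thetaBar_fst_eq_zero hsq ε₁₂ ht

/-- (Lemme 10) If `ε₁ = ε₂ = ε` is a nonzero square, the subgroup generated by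
`θ̄(Ω)`, where `Ω = {t | t·(t − ε₁)·(t − ε₂)` is a square}`, is `{0} × ZMod 2`. -/
theorem lemme10 {k : Type*} [Field k] [Fintype k] (hchar : ringChar k ≠ 2)
    (ε : k) (hε : ε ≠ 0) (hsq : IsSquare ε) (ε₁₂ : k) (hε₁₂ : ε₁₂ ≠ 0) :
    AddSubgroup.closure
        (thetaBar ε ε ε₁₂ '' {t : k | IsSquare (t * (t - ε) * (t - ε))}) =
      AddSubgroup.prod (⊥ : AddSubgroup (ZMod 2)) (⊤ : AddSubgroup (ZMod 2)) :=
  lemme10_general hchar ε hε hsq ε₁₂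
end

section
/- (Lemme 11) Let k be a finite field of odd characteristic, let ε ∈ k be a nonzero non-square, set ε₁ = ε₂ = ε, and let ε₁₂ ∈ k be an arbitrary nonzero element. Define sq : k → ZMod 2 by sq(x) = 0 if x is a square in k and sq(x) = 1 otherwise, define θ̄ : k → ZMod 2 × ZMod 2 by θ̄(0) = (sq(ε₁·ε₂), sq(−ε₁)), θ̄(ε₁) = (sq(ε₁), sq(ε₁·ε₁₂)), and θ̄(t) = (sq(t), sq(t − ε₁)) for t ∉ {0, ε₁}, and let Ω = {t ∈ k : t·(t − ε₁)·(t − ε₂) is a square in k}. Then the subgroup of (ZMod 2) × (ZMod 2) generated by the image θ̄(Ω) is the whole group (ZMod 2) × (ZMod 2). -/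
open scoped Classical

/-- There is a square `t` with `t - ε` not a square, when `ε` is a nonsquare. -/
lemma exists_sq_sub_nonsq {k : Type*} [Field k] [Fintype k]
    (ε : k) (hns : ¬ IsSquare ε) :
    ∃ t : k, IsSquare t ∧ ¬ IsSquare (t - ε) := by
  by_contra h
  push_neg at h
  set S : Finset k := Finset.univ.filter (fun t : k => IsSquare t) with hS
  have h0S : (0 : k) ∈ S := by
    simp [hS]
  have hmaps : ∀ a ∈ S, a - ε ∈ S.erase 0 := by
    intro a ha
    have haS : IsSquare a := by simpa [hS] using ha
    have h1 : IsSquare (a - ε) := h a haS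
    have h2 : a - ε ≠ 0 := by
      intro hz
      apply hns
      have : a = ε := by linear_combination hz
      rwa [this] at haS
    simp [hS, Finset.mem_erase, h2, h1]
  have hinj : Set.InjOn (fun a : k => a - ε) S := by
    intro a _ b _ hab
    simpa using sub_left_injective hab
  have hcard : S.card ≤ (S.erase 0).card :=
    Finset.card_le_card_of_injOn _ hmaps hinj
  rw [Finset.card_erase_of_mem h0S] at hcard
  have hpos : 0 < S.card := Finset.card_pos.mpr ⟨0, h0S⟩
  omega

/-- (Lemme 11) If `ε₁ = ε₂ = ε` is a nonzero non-square, the subgroup generated by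
`θ̄(Ω)`, where `Ω = {t | t·(t − ε₁)·(t − ε₂) is a square}`, is all of `ZMod 2 × ZMod 2`. -/
theorem lemme11 {k : Type*} [Field k] [Fintype k] (hchar : ringChar k ≠ 2)
    (ε : k) (hε : ε ≠ 0) (hns : ¬ IsSquare ε) (ε₁₂ : k) (hε₁₂ : ε₁₂ ≠ 0) :
    AddSubgroup.closure
        (thetaBar ε ε ε₁₂ '' {t : k | IsSquare (t * (t - ε) * (t - ε))}) =
      (⊤ : AddSubgroup (ZMod 2 × ZMod 2)) := by
  set C := AddSubgroup.closure
      (thetaBar ε ε ε₁₂ '' {t : k | IsSquare (t * (t - ε) * (t - ε))}) with hC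
  -- θ̄(ε) = (1, sqClass (ε * ε₁₂)) is in the image
  have h1 : ((1 : ZMod 2), sqClass (ε * ε₁₂)) ∈ C := by
    apply AddSubgroup.subset_closure
    refine ⟨ε, ?_, ?_⟩
    · show IsSquare (ε * (ε - ε) * (ε - ε))
      simp
    · simp [thetaBar, hε, sqClass, hns]
  -- (0, 1) is in the image
  have h2 : ((0 : ZMod 2), (1 : ZMod 2)) ∈ C := by
    obtain ⟨t, ht, htn⟩ := exists_sq_sub_nonsq ε hns
    apply AddSubgroup.subset_closure
    refine ⟨t, ?_, ?_⟩
    · show IsSquare (t * (t - ε) * (t - ε))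
      obtain ⟨b, hb⟩ := ht
      exact ⟨b * (t - ε), by rw [hb]; ring⟩
    · have htne : t ≠ ε := fun h => hns (h ▸ ht)
      by_cases ht0 : t = 0
      · subst ht0
        simp only [thetaBar, if_pos rfl]
        have : ¬ IsSquare (-ε) := by simpa using htn
        simp [sqClass, this, show IsSquare (ε * ε) from ⟨ε, rfl⟩]
      · simp [thetaBar, ht0, htne, sqClass, ht, htn]
  -- memberships of (1,0) and (1,1)
  have hcases : sqClass (ε * ε₁₂) = 0 ∨ sqClass (ε * ε₁₂) = 1 := by
    unfold sqClass; split <;> simp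
  have h10 : ((1 : ZMod 2), (0 : ZMod 2)) ∈ C := by
    rcases hcases with h | h
    · exact h ▸ h1
    · have := C.add_mem h1 h2
      rw [h] at this
      simpa [Prod.mk_add_mk, show (1 : ZMod 2) + 1 = 0 from by decide] using this
  have h11 : ((1 : ZMod 2), (1 : ZMod 2)) ∈ C := by
    rcases hcases with h | h
    · have := C.add_mem h1 h2
      rw [h] at this
      simpa using this
    · exact h ▸ h1
  rw [eq_top_iff]
  rintro ⟨a, b⟩ -
  have ha : a = 0 ∨ a = 1 := by revert a; decide
  have hb : b = 0 ∨ b = 1 := by revert b; decide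
  rcases ha with rfl | rfl <;> rcases hb with rfl | rfl
  · exact C.zero_mem
  · exact h2
  · exact h10
  · exact h11
end

section
/- (Lemme 2, norm criterion for units of ℚ_p in the ramified case d = p) Let p be an odd prime and let u ∈ ℤ_p be a unit of the ring ℤ_p of p-adic integers. Then there exist x, y ∈ ℚ_p with x² − p·y² = u if and only if the residue of u in the residue field ZMod p (via the reduction map ℤ_p → ZMod p) is a square in ZMod p. -/
/-!
If `x² − p·y² = u` with `‖u‖ ≤ 1`, the two terms have distinct norms, since `‖x²‖` is an even
and `‖p·y²‖` an odd power of `p`. Hence both have norm at most `1`, so `x` and `y` lie in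
`ℤ_p`, and reducing mod `p` kills `p·y²`, leaving the residue of `u` a square. Conversely,
for `p` odd, a unit whose residue is a square is a square in `ℤ_p` by Hensel's lemma applied
to `X² − u`, whose derivative `2X` is a unit at any lift of the residual square root.
-/

open Polynomial

variable {p : ℕ} [Fact p.Prime]

namespace Padic

theorem norm_sq_ne_norm_p (z : ℚ_[p]) : ‖z ^ 2‖ ≠ ‖(p : ℚ_[p])‖ := by
  have hp : (1 : ℝ) < p := by exact_mod_cast (Fact.out : p.Prime).one_lt
  rcases eq_or_ne z 0 with rfl | hz
  · simpa [norm_p] using (zero_lt_one.trans hp).ne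
  · rw [norm_pow, norm_eq_zpow_neg_valuation hz, norm_p, ← zpow_natCast, ← zpow_mul,
      ← zpow_neg_one, Ne, zpow_right_inj₀ (by positivity) hp.ne']
    omega

theorem norm_sq_ne_norm_p_mul_sq (x : ℚ_[p]) {y : ℚ_[p]} (hy : y ≠ 0) :
    ‖x ^ 2‖ ≠ ‖(p : ℚ_[p]) * y ^ 2‖ := by
  intro h
  apply norm_sq_ne_norm_p (x / y)
  rw [div_pow, norm_div, h, norm_mul, mul_div_cancel_right₀ _ (by simpa using hy)]

theorem norm_sq_sub_p_mul_sq (x y : ℚ_[p]) :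
    ‖x ^ 2 - p * y ^ 2‖ = max ‖x ^ 2‖ ‖(p : ℚ_[p]) * y ^ 2‖ := by
  rcases eq_or_ne y 0 with rfl | hy
  · simp
  · have hne : ‖x ^ 2‖ ≠ ‖-((p : ℚ_[p]) * y ^ 2)‖ := by
      rw [norm_neg]
      exact norm_sq_ne_norm_p_mul_sq x hy
    rw [sub_eq_add_neg, add_eq_max_of_ne hne, norm_neg]

theorem norm_le_one_of_norm_p_mul_sq_le_one {y : ℚ_[p]} (h : ‖(p : ℚ_[p]) * y ^ 2‖ ≤ 1) :
    ‖y‖ ≤ 1 := by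
  have hp : (1 : ℝ) < p := by exact_mod_cast (Fact.out : p.Prime).one_lt
  have hy : ‖y‖ ^ 2 ≤ p := by
    rw [norm_mul, norm_pow, norm_p] at h
    rwa [inv_mul_le_iff₀ (by positivity), mul_one] at h
  have hlt : ‖y‖ < (p : ℝ) ^ ((0 : ℤ) + 1) := by
    rw [zero_add, zpow_one]
    nlinarith [norm_nonneg y]
  simpa using (norm_le_pow_iff_norm_lt_pow_add_one y 0).mpr hlt

end Padic

namespace PadicInt

theorem norm_lt_one_iff_toZMod_eq_zero {z : ℤ_[p]} : ‖z‖ < 1 ↔ toZMod z = 0 := by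
  rw [← RingHom.mem_ker, ker_toZMod, IsLocalRing.mem_maximalIdeal, mem_nonunits]

theorem isUnit_iff_toZMod_ne_zero {z : ℤ_[p]} : IsUnit z ↔ toZMod z ≠ 0 := by
  rw [← IsLocalRing.notMem_maximalIdeal, ← ker_toZMod, RingHom.mem_ker]

theorem isSquare_toZMod_of_eq_sq_sub_p_mul_sq {u : ℤ_[p]} {x y : ℚ_[p]}
    (h : x ^ 2 - p * y ^ 2 = u) : IsSquare (toZMod u) := by
  have hmax : max ‖x ^ 2‖ ‖(p : ℚ_[p]) * y ^ 2‖ ≤ 1 := by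
    rw [← Padic.norm_sq_sub_p_mul_sq, h, ← norm_def]
    exact u.norm_le_one
  have hx : ‖x‖ ≤ 1 := by
    have := (le_max_left _ _).trans hmax
    rwa [norm_pow, pow_le_one_iff_of_nonneg (norm_nonneg x) two_ne_zero] at this
  have hy : ‖y‖ ≤ 1 := Padic.norm_le_one_of_norm_p_mul_sq_le_one ((le_max_right _ _).trans hmax)
  set x' : ℤ_[p] := ⟨x, hx⟩
  set y' : ℤ_[p] := ⟨y, hy⟩
  have hu : u = x' ^ 2 - p * y' ^ 2 := Subtype.ext (by push_cast; exact h.symm)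
  refine ⟨toZMod x', ?_⟩
  rw [hu, map_sub, map_mul, map_natCast, ZMod.natCast_self, zero_mul, sub_zero, map_pow, sq]

theorem isSquare_of_isSquare_toZMod (hp : p ≠ 2) {u : ℤ_[p]} (hu : IsUnit u)
    (h : IsSquare (toZMod u)) : IsSquare u := by
  obtain ⟨b, hb⟩ := h
  obtain ⟨a, rfl⟩ := ZMod.ringHom_surjective toZMod b
  set F : ℤ_[p][X] := X ^ 2 - C u
  have hF : ‖F.aeval a‖ < 1 := by
    rw [norm_lt_one_iff_toZMod_eq_zero]
    simp [F, hb, sq]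
  have hF' : ‖F.derivative.aeval a‖ = 1 := by
    rw [← PadicInt.isUnit_iff, isUnit_iff_toZMod_ne_zero]
    have h2 : (2 : ZMod p) ≠ 0 := Ring.two_ne_zero (by rwa [ZMod.ringChar_zmod_n])
    have ha : toZMod a ≠ 0 := left_ne_zero_of_mul (hb ▸ isUnit_iff_toZMod_ne_zero.mp hu)
    simp [F, one_add_one_eq_two, map_ofNat, h2, ha]
  obtain ⟨z, hz, -⟩ := hensels_lemma (F := F) (a := a) (by rwa [hF', one_pow])
  refine ⟨z, ?_⟩
  simpa [F, sub_eq_zero, sq, eq_comm] using hz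

end PadicInt

/-- (Lemme 2, norm criterion for units of `ℚ_p`, `d = p`) A unit `u` of `ℤ_p` (p odd)
is of the form `x² − p·y²` with `x, y ∈ ℚ_p` if and only if its residue in `ZMod p`
is a square. -/
theorem unit_is_norm_iff_residue_square (p : ℕ) [Fact p.Prime] (hp : p ≠ 2)
    (u : ℤ_[p]) (hu : IsUnit u) :
    (∃ x y : ℚ_[p], x ^ 2 - p * y ^ 2 = u) ↔ IsSquare (PadicInt.toZMod u) := by
  refine ⟨fun ⟨x, y, h⟩ => PadicInt.isSquare_toZMod_of_eq_sq_sub_p_mul_sq h, fun h => ?_⟩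
  obtain ⟨z, hz⟩ := PadicInt.isSquare_of_isSquare_toZMod hp hu h
  exact ⟨z, 0, by rw [hz]; push_cast; ring⟩
end
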